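/- For all x ∈ [0, 0.9], x − (6/π)·arcsin(x/2) ≤ 0.047·x. -/

import Mathlib

open Real

theorem Real.self_le_arcsin {y : ℝ} (h₀ : 0 ≤ y) (h₁ : y ≤ 1) : y ≤ arcsin y := by
  simpa [sin_arcsin (by linarith) h₁] using sin_le (arcsin_nonneg.2 h₀)

theorem Real.lt_three_div_pi : (0.953 : ℝ) < 3 / π := by
  rw [lt_div_iff₀ pi_pos]
  linarith [pi_lt_d6]

/-- For `x ∈ [0, 0.9]`, `x − (6/π)·arcsin(x/2) ≤ 0.047·x`. -/
theorem gap_le_small_multiple :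
    ∀ x ∈ Set.Icc (0 : ℝ) 0.9,
      x - (6 / Real.pi) * Real.arcsin (x / 2) ≤ 0.047 * x := by
  rintro x ⟨hx₀, hx₁⟩
  have h_arcsin : x / 2 ≤ arcsin (x / 2) := self_le_arcsin (by linarith) (by linarith)
  calc x - 6 / π * arcsin (x / 2)
      ≤ x - 6 / π * (x / 2) := by gcongr
    _ = x - 3 / π * x := by ring
    _ ≤ x - 0.953 * x := by gcongr; exact lt_three_div_pi.le
    _ = 0.047 * x := by ring
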